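/- arXiv:math/9803111 — 5 statements merged into one kernel-verified Lean document; each statement's English description precedes it below -/
import Mathlib

section
/- Let A be a commutative ring and f : L• → L•' a morphism of three-term complexes of flat A-modules which induces, for every A-module Q, an isomorphism on h₀(− ⊗_A Q) and a monomorphism on h₋₁(− ⊗_A Q), and which moreover induces a surjection h₁(L•) → h₁(L•') on the degree-1 homology. Then for every A-module Q the induced map h₁(L• ⊗_A Q) → h₁(L•' ⊗_A Q) is surjective. -/
/-!
The argument runs through the mapping cone `C` of `f`, the complex
`L₁ → L₀ × M₁ → L₋₁ × M₀ → M₋₁`. The conditions on `h₀` and `h₋₁` make `C ⊗ Q` exact at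
`L₋₁ × M₀` for every `Q`; the injectivity on `h₀` (for `Q = A`) and the surjectivity on `h₁`
make `C` exact at `L₀ × M₁`. Universal exactness at `L₋₁ × M₀` means that the cokernel of
`L₀ × M₁ → L₋₁ × M₀` embeds universally into the flat module `M₋₁`, so it is flat. Hence the
boundaries `B ⊆ L₋₁ × M₀` satisfy `B ⊗ Q ↪ (L₋₁ × M₀) ⊗ Q`, and right exactness of `⊗ Q` on
`L₁ → L₀ × M₁ → B → 0` keeps `C ⊗ Q` exact at `L₀ × M₁`. A cycle `x` of `M₁ ⊗ Q` gives the
cycle `(0, x)` of `C ⊗ Q`, and any preimage `y ∈ L₁ ⊗ Q` of it is the required lift.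
-/

universe u

/-- The condition that a morphism of three-term complexes (with components
`f₀`, `f₋₁` in degrees `0` and `-1`) is a *pseudo-isomorphism*: for every
`A`-module `Q`, it induces an isomorphism on `h₀(− ⊗ Q)` (first two clauses:
surjectivity and injectivity modulo boundaries) and a monomorphism on
`h₋₁(− ⊗ Q)` (third clause). -/
def IsPsi {A : Type u} [CommRing A]
    {L1 L0 Lm1 M1 M0 Mm1 : Type u}
    [AddCommGroup L1] [AddCommGroup L0] [AddCommGroup Lm1]
    [AddCommGroup M1] [AddCommGroup M0] [AddCommGroup Mm1]
    [Module A L1] [Module A L0] [Module A Lm1]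
    [Module A M1] [Module A M0] [Module A Mm1]
    (d1 : L1 →ₗ[A] L0) (d0 : L0 →ₗ[A] Lm1)
    (e1 : M1 →ₗ[A] M0) (e0 : M0 →ₗ[A] Mm1)
    (f0 : L0 →ₗ[A] M0) (fm1 : Lm1 →ₗ[A] Mm1) : Prop :=
  ∀ (Q : Type u) [AddCommGroup Q] [Module A Q],
    (∀ x : TensorProduct A M0 Q, e0.rTensor Q x = 0 →
        ∃ y : TensorProduct A L0 Q, d0.rTensor Q y = 0 ∧
          f0.rTensor Q y - x ∈ LinearMap.range (e1.rTensor Q)) ∧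
    (∀ y : TensorProduct A L0 Q, d0.rTensor Q y = 0 →
        f0.rTensor Q y ∈ LinearMap.range (e1.rTensor Q) →
        y ∈ LinearMap.range (d1.rTensor Q)) ∧
    (∀ z : TensorProduct A Lm1 Q, fm1.rTensor Q z ∈ LinearMap.range (e0.rTensor Q) →
        z ∈ LinearMap.range (d0.rTensor Q))

open TensorProduct LinearMap

section Flatness

variable {A : Type u} [CommRing A]

theorem Module.Flat.of_forall_rTensor_injective {N F : Type*} [AddCommGroup N] [Module A N]
    [AddCommGroup F] [Module A F] [Module.Flat A F] (g : N →ₗ[A] F)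
    (hg : ∀ (Q : Type u) [AddCommGroup Q] [Module A Q], Function.Injective (g.rTensor Q)) :
    Module.Flat A N := by
  rw [Module.Flat.iff_lTensor_injective']
  intro I
  have hsq : g.rTensor A ∘ₗ I.subtype.lTensor N = I.subtype.lTensor F ∘ₗ g.rTensor I := by
    rw [rTensor_comp_lTensor, lTensor_comp_rTensor]
  refine Function.Injective.of_comp (f := g.rTensor A) ?_
  rw [← LinearMap.coe_comp, hsq, LinearMap.coe_comp]
  exact (Module.Flat.lTensor_preserves_injective_linearMap _ I.injective_subtype).comp (hg I)

theorem Submodule.rTensor_subtype_injective_of_flat_quotient {M : Type*} [AddCommGroup M]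
    [Module A M] (B : Submodule A M) [Module.Flat A (M ⧸ B)] (Q : Type*) [AddCommGroup Q]
    [Module A Q] : Function.Injective (B.subtype.rTensor Q) := by
  rw [← LinearMap.lTensor_inj_iff_rTensor_inj]
  exact lTensor_injective_of_exact_of_exact_of_rTensor_injective
    (LinearMap.exact_subtype_ker_map (Finsupp.linearCombination A (id : Q → Q)))
    (Finsupp.linearCombination_id_surjective A Q)
    (LinearMap.exact_subtype_mkQ B) B.mkQ_surjective
    (Module.Flat.rTensor_preserves_injective_linearMap _ (Submodule.injective_subtype _))
    (Module.Flat.lTensor_preserves_injective_linearMap _ (Submodule.injective_subtype _))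

variable {X2 X1 X0 Xm1 : Type*} [AddCommGroup X2] [AddCommGroup X1] [AddCommGroup X0]
  [AddCommGroup Xm1] [Module A X2] [Module A X1] [Module A X0] [Module A Xm1]

theorem Module.Flat.quotient_range_of_forall_ker_rTensor_le_range [Module.Flat A Xm1]
    (δ1 : X1 →ₗ[A] X0) (δ0 : X0 →ₗ[A] Xm1) (hδ : δ0 ∘ₗ δ1 = 0)
    (hker : ∀ (Q : Type u) [AddCommGroup Q] [Module A Q],
      ker (δ0.rTensor Q) ≤ range (δ1.rTensor Q)) :
    Module.Flat A (X0 ⧸ range δ1) := by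
  have hle : range δ1 ≤ ker δ0 := range_le_ker_iff.mpr hδ
  have hmk : (range δ1).mkQ ∘ₗ δ1 = 0 := (exact_map_mkQ_range δ1).linearMap_comp_eq_zero
  refine Module.Flat.of_forall_rTensor_injective ((range δ1).liftQ δ0 hle) fun Q _ _ => ?_
  rw [injective_iff_map_eq_zero]
  intro v hv
  obtain ⟨w, rfl⟩ := rTensor_surjective Q (range δ1).mkQ_surjective v
  rw [← rTensor_comp_apply, Submodule.liftQ_mkQ] at hv
  obtain ⟨w', rfl⟩ := hker Q hv
  rw [← rTensor_comp_apply, hmk, rTensor_zero, LinearMap.zero_apply]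

theorem Function.Exact.rTensor_of_flat_quotient_range {δ2 : X2 →ₗ[A] X1} {δ1 : X1 →ₗ[A] X0}
    (h : Function.Exact δ2 δ1) [Module.Flat A (X0 ⧸ range δ1)] (Q : Type*) [AddCommGroup Q]
    [Module A Q] : Function.Exact (δ2.rTensor Q) (δ1.rTensor Q) := by
  have hδ1 : δ1 = (range δ1).subtype ∘ₗ δ1.rangeRestrict := rfl
  have hres : Function.Exact δ2 δ1.rangeRestrict := by
    rwa [hδ1, Function.Injective.comp_exact_iff_exact (range δ1).injective_subtype] at h
  rw [hδ1, rTensor_comp, Function.Injective.comp_exact_iff_exact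
    ((range δ1).rTensor_subtype_injective_of_flat_quotient Q)]
  exact rTensor_exact Q hres δ1.surjective_rangeRestrict

end Flatness

section MappingCone

variable {R : Type*} [Ring R] {L1 L0 Lm1 M1 M0 Mm1 : Type*}
  [AddCommGroup L1] [AddCommGroup L0] [AddCommGroup Lm1]
  [AddCommGroup M1] [AddCommGroup M0] [AddCommGroup Mm1]
  [Module R L1] [Module R L0] [Module R Lm1] [Module R M1] [Module R M0] [Module R Mm1]
  {d1 : L1 →ₗ[R] L0} {d0 : L0 →ₗ[R] Lm1} {e1 : M1 →ₗ[R] M0} {e0 : M0 →ₗ[R] Mm1}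
  {f1 : L1 →ₗ[R] M1} {f0 : L0 →ₗ[R] M0} {fm1 : Lm1 →ₗ[R] Mm1}

-- The mapping cone of `f`: `L₁ → L₀ × M₁ → L₋₁ × M₀ → M₋₁`.
variable (d1 f1) in
def coneD2 : L1 →ₗ[R] L0 × M1 := d1.prod f1

variable (d0 e1 f0) in
def coneD1 : L0 × M1 →ₗ[R] Lm1 × M0 :=
  (d0 ∘ₗ fst R L0 M1).prod (f0 ∘ₗ fst R L0 M1 - e1 ∘ₗ snd R L0 M1)

variable (e0 fm1) in
def coneD0 : Lm1 × M0 →ₗ[R] Mm1 := fm1 ∘ₗ fst R Lm1 M0 - e0 ∘ₗ snd R Lm1 M0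

@[simp] lemma coneD2_apply (y : L1) : coneD2 d1 f1 y = (d1 y, f1 y) := rfl

@[simp] lemma coneD1_apply (v : L0 × M1) : coneD1 d0 e1 f0 v = (d0 v.1, f0 v.1 - e1 v.2) := rfl

@[simp] lemma coneD0_apply (v : Lm1 × M0) : coneD0 e0 fm1 v = fm1 v.1 - e0 v.2 := rfl

lemma coneD1_comp_coneD2 (hd : d0 ∘ₗ d1 = 0) (hsq1 : e1 ∘ₗ f1 = f0 ∘ₗ d1) :
    coneD1 d0 e1 f0 ∘ₗ coneD2 d1 f1 = 0 := by
  ext y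
  · exact LinearMap.congr_fun hd y
  · simpa [sub_eq_zero] using (LinearMap.congr_fun hsq1 y).symm

lemma coneD0_comp_coneD1 (he : e0 ∘ₗ e1 = 0) (hsq0 : e0 ∘ₗ f0 = fm1 ∘ₗ d0) :
    coneD0 e0 fm1 ∘ₗ coneD1 d0 e1 f0 = 0 := by
  ext v
  · simpa [sub_eq_zero] using (LinearMap.congr_fun hsq0 v).symm
  · simpa using LinearMap.congr_fun he v

lemma ker_coneD1_le_range_coneD2 (hsq1 : e1 ∘ₗ f1 = f0 ∘ₗ d1)
    (h0inj : ∀ y, d0 y = 0 → f0 y ∈ range e1 → y ∈ range d1)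
    (h1surj : ∀ x, e1 x = 0 → ∃ y, d1 y = 0 ∧ f1 y = x) :
    ker (coneD1 d0 e1 f0) ≤ range (coneD2 d1 f1) := by
  rintro ⟨a, b⟩ hab
  simp only [mem_ker, coneD1_apply, Prod.mk_eq_zero, sub_eq_zero] at hab
  obtain ⟨y, rfl⟩ := h0inj a hab.1 ⟨b, hab.2.symm⟩
  have hcycle : e1 (b - f1 y) = 0 := by
    rw [map_sub, ← hab.2, ← LinearMap.comp_apply e1 f1, hsq1, LinearMap.comp_apply, sub_self]
  obtain ⟨z, hz, hzb⟩ := h1surj _ hcycle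
  exact ⟨y + z, by simp [hz, hzb]⟩

lemma ker_coneD0_le_range_coneD1 (hsq0 : e0 ∘ₗ f0 = fm1 ∘ₗ d0)
    (h0surj : ∀ x, e0 x = 0 → ∃ y, d0 y = 0 ∧ f0 y - x ∈ range e1)
    (hm1inj : ∀ z, fm1 z ∈ range e0 → z ∈ range d0) :
    ker (coneD0 e0 fm1) ≤ range (coneD1 d0 e1 f0) := by
  rintro ⟨c, m⟩ hcm
  simp only [mem_ker, coneD0_apply, sub_eq_zero] at hcm
  obtain ⟨a, rfl⟩ := hm1inj c ⟨m, hcm.symm⟩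
  have hcycle : e0 (m - f0 a) = 0 := by
    rw [map_sub, ← hcm, ← LinearMap.comp_apply e0 f0, hsq0, LinearMap.comp_apply, sub_self]
  obtain ⟨y, hy, b, hb⟩ := h0surj _ hcycle
  refine ⟨(a + y, b), ?_⟩
  simp only [coneD1_apply, map_add, hy, add_zero, hb]
  congr 1
  abel

end MappingCone

section TensoredCone

variable {A : Type u} [CommRing A] {L1 L0 Lm1 M1 M0 Mm1 : Type*}
  [AddCommGroup L1] [AddCommGroup L0] [AddCommGroup Lm1]
  [AddCommGroup M1] [AddCommGroup M0] [AddCommGroup Mm1]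
  [Module A L1] [Module A L0] [Module A Lm1] [Module A M1] [Module A M0] [Module A Mm1]
  (Q : Type*) [AddCommGroup Q] [Module A Q]

lemma coneD2_rTensor (d1 : L1 →ₗ[A] L0) (f1 : L1 →ₗ[A] M1) :
    coneD2 (d1.rTensor Q) (f1.rTensor Q) ∘ₗ (LinearEquiv.refl A (L1 ⊗[A] Q)).toLinearMap =
      (prodLeft A A L0 M1 Q).toLinearMap ∘ₗ (coneD2 d1 f1).rTensor Q :=
  TensorProduct.ext' fun y q => by simp

lemma coneD1_rTensor (d0 : L0 →ₗ[A] Lm1) (e1 : M1 →ₗ[A] M0) (f0 : L0 →ₗ[A] M0) :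
    coneD1 (d0.rTensor Q) (e1.rTensor Q) (f0.rTensor Q) ∘ₗ (prodLeft A A L0 M1 Q).toLinearMap =
      (prodLeft A A Lm1 M0 Q).toLinearMap ∘ₗ (coneD1 d0 e1 f0).rTensor Q :=
  TensorProduct.ext' fun ⟨a, b⟩ q => by simp [sub_tmul]

lemma coneD0_rTensor (e0 : M0 →ₗ[A] Mm1) (fm1 : Lm1 →ₗ[A] Mm1) :
    (coneD0 e0 fm1).rTensor Q =
      coneD0 (e0.rTensor Q) (fm1.rTensor Q) ∘ₗ (prodLeft A A Lm1 M0 Q).toLinearMap :=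
  TensorProduct.ext' fun ⟨c, m⟩ q => by simp [sub_tmul]

end TensoredCone

lemma LinearMap.mem_range_of_tmul_one_mem_range_rTensor {A : Type*} [CommRing A]
    {X Y : Type*} [AddCommGroup X] [AddCommGroup Y] [Module A X] [Module A Y]
    (g : X →ₗ[A] Y) {y : Y} (h : y ⊗ₜ[A] (1 : A) ∈ range (g.rTensor A)) : y ∈ range g := by
  obtain ⟨w, hw⟩ := h
  have hrid : (TensorProduct.rid A Y).toLinearMap ∘ₗ g.rTensor A =
      g ∘ₗ (TensorProduct.rid A X).toLinearMap :=
    TensorProduct.ext' fun x a => by simp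
  refine ⟨TensorProduct.rid A X w, ?_⟩
  simpa [hw] using (LinearMap.congr_fun hrid w).symm

section Psi

variable {A : Type u} [CommRing A] {L1 L0 Lm1 M1 M0 Mm1 : Type u}
  [AddCommGroup L1] [AddCommGroup L0] [AddCommGroup Lm1]
  [AddCommGroup M1] [AddCommGroup M0] [AddCommGroup Mm1]
  [Module A L1] [Module A L0] [Module A Lm1] [Module A M1] [Module A M0] [Module A Mm1]
  {d1 : L1 →ₗ[A] L0} {d0 : L0 →ₗ[A] Lm1} {e1 : M1 →ₗ[A] M0} {e0 : M0 →ₗ[A] Mm1}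
  {f0 : L0 →ₗ[A] M0} {fm1 : Lm1 →ₗ[A] Mm1}

theorem IsPsi.mem_range_of_map_mem_range (hpsi : IsPsi d1 d0 e1 e0 f0 fm1) {y : L0}
    (hy : d0 y = 0) (hfy : f0 y ∈ range e1) : y ∈ range d1 := by
  obtain ⟨-, h0inj, -⟩ := hpsi A
  obtain ⟨b, hb⟩ := hfy
  refine d1.mem_range_of_tmul_one_mem_range_rTensor (h0inj _ ?_ ⟨b ⊗ₜ 1, ?_⟩)
  · rw [rTensor_tmul, hy, zero_tmul]
  · rw [rTensor_tmul, rTensor_tmul, hb]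

theorem IsPsi.ker_coneD0_rTensor_le_range (hpsi : IsPsi d1 d0 e1 e0 f0 fm1)
    (hsq0 : e0 ∘ₗ f0 = fm1 ∘ₗ d0) (Q : Type u) [AddCommGroup Q] [Module A Q] :
    ker ((coneD0 e0 fm1).rTensor Q) ≤ range ((coneD1 d0 e1 f0).rTensor Q) := by
  obtain ⟨h0surj, -, hm1inj⟩ := hpsi Q
  have hsq0' : e0.rTensor Q ∘ₗ f0.rTensor Q = fm1.rTensor Q ∘ₗ d0.rTensor Q := by
    rw [← rTensor_comp, hsq0, rTensor_comp]
  intro u hu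
  rw [mem_ker, coneD0_rTensor, comp_apply] at hu
  obtain ⟨w, hw⟩ := ker_coneD0_le_range_coneD1 hsq0' h0surj hm1inj hu
  refine ⟨(prodLeft A A L0 M1 Q).symm w, (prodLeft A A Lm1 M0 Q).injective ?_⟩
  have hcomm := LinearMap.congr_fun (coneD1_rTensor Q d0 e1 f0) ((prodLeft A A L0 M1 Q).symm w)
  simp only [comp_apply, LinearEquiv.coe_coe, LinearEquiv.apply_symm_apply, hw] at hcomm
  exact hcomm.symm

end Psi

theorem stmt5_general {A : Type u} [CommRing A]
    {L1 L0 Lm1 M1 M0 Mm1 : Type u}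
    [AddCommGroup L1] [AddCommGroup L0] [AddCommGroup Lm1]
    [AddCommGroup M1] [AddCommGroup M0] [AddCommGroup Mm1]
    [Module A L1] [Module A L0] [Module A Lm1]
    [Module A M1] [Module A M0] [Module A Mm1]
    [Module.Flat A Mm1]
    (d1 : L1 →ₗ[A] L0) (d0 : L0 →ₗ[A] Lm1) (hd : d0.comp d1 = 0)
    (e1 : M1 →ₗ[A] M0) (e0 : M0 →ₗ[A] Mm1) (he : e0.comp e1 = 0)
    (f1 : L1 →ₗ[A] M1) (f0 : L0 →ₗ[A] M0) (fm1 : Lm1 →ₗ[A] Mm1)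
    (hsq1 : e1.comp f1 = f0.comp d1) (hsq0 : e0.comp f0 = fm1.comp d0)
    (hpsi : IsPsi d1 d0 e1 e0 f0 fm1)
    (hsurj : ∀ x : M1, e1 x = 0 → ∃ y : L1, d1 y = 0 ∧ f1 y = x) :
    ∀ (Q : Type u) [AddCommGroup Q] [Module A Q],
      ∀ x : TensorProduct A M1 Q, e1.rTensor Q x = 0 →
        ∃ y : TensorProduct A L1 Q, d1.rTensor Q y = 0 ∧ f1.rTensor Q y = x := by
  intro Q _ _ x hx
  have hexact : Function.Exact (coneD2 d1 f1) (coneD1 d0 e1 f0) :=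
    exact_of_comp_eq_zero_of_ker_le_range (coneD1_comp_coneD2 hd hsq1)
      (ker_coneD1_le_range_coneD2 hsq1 (fun _ => hpsi.mem_range_of_map_mem_range) hsurj)
  have : Module.Flat A ((Lm1 × M0) ⧸ range (coneD1 d0 e1 f0)) :=
    .quotient_range_of_forall_ker_rTensor_le_range _ _ (coneD0_comp_coneD1 he hsq0)
      fun Q _ _ => hpsi.ker_coneD0_rTensor_le_range hsq0 Q
  have hexactQ : Function.Exact (coneD2 (d1.rTensor Q) (f1.rTensor Q))
      (coneD1 (d0.rTensor Q) (e1.rTensor Q) (f0.rTensor Q)) :=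
    (Function.Exact.iff_of_ladder_linearEquiv (coneD2_rTensor Q d1 f1)
      (coneD1_rTensor Q d0 e1 f0)).mpr (hexact.rTensor_of_flat_quotient_range Q)
  obtain ⟨y, hy⟩ := (hexactQ (0, x)).mp (by simp [hx])
  exact ⟨y, congrArg Prod.fst hy, congrArg Prod.snd hy⟩

/-- (1.16, last clause) If a pseudo-isomorphism of three-term complexes of flat
modules moreover induces a surjection `h₁(L•) → h₁(L•')` on degree-one homology,
then for every `A`-module `Q` the induced map `h₁(L• ⊗ Q) → h₁(L•' ⊗ Q)` is
surjective. -/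
theorem stmt5 {A : Type u} [CommRing A]
    {L1 L0 Lm1 M1 M0 Mm1 : Type u}
    [AddCommGroup L1] [AddCommGroup L0] [AddCommGroup Lm1]
    [AddCommGroup M1] [AddCommGroup M0] [AddCommGroup Mm1]
    [Module A L1] [Module A L0] [Module A Lm1]
    [Module A M1] [Module A M0] [Module A Mm1]
    [Module.Flat A L1] [Module.Flat A L0] [Module.Flat A Lm1]
    [Module.Flat A M1] [Module.Flat A M0] [Module.Flat A Mm1]
    (d1 : L1 →ₗ[A] L0) (d0 : L0 →ₗ[A] Lm1) (hd : d0.comp d1 = 0)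
    (e1 : M1 →ₗ[A] M0) (e0 : M0 →ₗ[A] Mm1) (he : e0.comp e1 = 0)
    (f1 : L1 →ₗ[A] M1) (f0 : L0 →ₗ[A] M0) (fm1 : Lm1 →ₗ[A] Mm1)
    (hsq1 : e1.comp f1 = f0.comp d1) (hsq0 : e0.comp f0 = fm1.comp d0)
    (hpsi : IsPsi d1 d0 e1 e0 f0 fm1)
    (hsurj : ∀ x : M1, e1 x = 0 → ∃ y : L1, d1 y = 0 ∧ f1 y = x) :
    ∀ (Q : Type u) [AddCommGroup Q] [Module A Q],
      ∀ x : TensorProduct A M1 Q, e1.rTensor Q x = 0 →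
        ∃ y : TensorProduct A L1 Q, d1.rTensor Q y = 0 ∧ f1.rTensor Q y = x :=
  stmt5_general d1 d0 hd e1 e0 he f1 f0 fm1 hsq1 hsq0 hpsi hsurj
end

section
/- Let A be a commutative ring and d₁ : L₁ → L₀ a map of flat A-modules. Then coker(d₁) is flat over A if and only if for every A-module Q the natural map (ker d₁) ⊗_A Q → ker(d₁ ⊗ id_Q) is an isomorphism. -/
universe u

open TensorProduct


/-- The square `rTensor`/`lTensor` commutes, applied pointwise. -/
lemma aux_tensor_sq {A : Type u} [CommRing A] {M N P Q' : Type u}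
    [AddCommGroup M] [AddCommGroup N] [AddCommGroup P] [AddCommGroup Q']
    [Module A M] [Module A N] [Module A P] [Module A Q']
    (f : M →ₗ[A] N) (g : P →ₗ[A] Q') (x : M ⊗[A] P) :
    LinearMap.lTensor N g (LinearMap.rTensor P f x)
      = LinearMap.rTensor Q' f (LinearMap.lTensor M g x) := by
  rw [← LinearMap.comp_apply, LinearMap.lTensor_comp_rTensor,
    ← LinearMap.rTensor_comp_lTensor, LinearMap.comp_apply]

section Aux

variable {A : Type u} [CommRing A]

/-- Core diagram chase: in a short exact sequence `0 → N' → N → N'' → 0` with `N''` flat,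
tensoring the injection with `Q` preserves injectivity, given a flat cover `F ↠ Q`. -/
lemma aux_key
    {N' N N'' : Type u} [AddCommGroup N'] [AddCommGroup N] [AddCommGroup N'']
    [Module A N'] [Module A N] [Module A N''] [Module.Flat A N'']
    {f : N' →ₗ[A] N} {g : N →ₗ[A] N''} (hf : Function.Injective f)
    (hfg : Function.Exact f g) (hg : Function.Surjective g)
    (Q : Type u) [AddCommGroup Q] [Module A Q]
    (F : Type u) [AddCommGroup F] [Module A F] [Module.Flat A F]
    (π : F →ₗ[A] Q) (hπ : Function.Surjective π) :
    Function.Injective (LinearMap.rTensor Q f) := by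
  set σ : (LinearMap.ker π) →ₗ[A] F := (LinearMap.ker π).subtype with hσdef
  have hσπ : Function.Exact σ π := LinearMap.exact_subtype_ker_map π
  rw [← LinearMap.ker_eq_bot, LinearMap.ker_eq_bot']
  intro x hx
  obtain ⟨y, hy⟩ := LinearMap.lTensor_surjective N' hπ x
  -- push down to the relation module
  have h1 : LinearMap.lTensor N π (LinearMap.rTensor F f y) = 0 := by
    rw [aux_tensor_sq f π y, hy, hx]
  obtain ⟨z, hz⟩ := (lTensor_exact N hσπ hπ (LinearMap.rTensor F f y)).mp h1
  have h2 : LinearMap.lTensor N'' σ (LinearMap.rTensor (LinearMap.ker π) g z) = 0 := by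
    rw [aux_tensor_sq g σ z, hz, ← LinearMap.comp_apply, ← LinearMap.rTensor_comp,
      hfg.linearMap_comp_eq_zero, LinearMap.rTensor_zero, LinearMap.zero_apply]
  have h3 : LinearMap.rTensor (LinearMap.ker π) g z = 0 :=
    (LinearMap.map_eq_zero_iff _
      (Module.Flat.lTensor_preserves_injective_linearMap σ
        (Submodule.injective_subtype _))).mp h2
  obtain ⟨w, hw⟩ := (rTensor_exact (LinearMap.ker π) hfg hg z).mp h3
  have h4 : LinearMap.rTensor F f (LinearMap.lTensor N' σ w)
      = LinearMap.rTensor F f y := by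
    rw [← aux_tensor_sq f σ w, hw, hz]
  have h5 : LinearMap.lTensor N' σ w = y :=
    Module.Flat.rTensor_preserves_injective_linearMap f hf h4
  rw [← hy, ← h5, ← LinearMap.comp_apply, ← LinearMap.lTensor_comp,
    hσπ.linearMap_comp_eq_zero, LinearMap.lTensor_zero, LinearMap.zero_apply]

/-- In a short exact sequence `0 → N' → N → N'' → 0` with `N''` flat, tensoring the
injection with any module preserves injectivity. -/
lemma aux_rTensor_inj_of_flat_quot
    {N' N N'' : Type u} [AddCommGroup N'] [AddCommGroup N] [AddCommGroup N'']
    [Module A N'] [Module A N] [Module A N''] [Module.Flat A N'']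
    {f : N' →ₗ[A] N} {g : N →ₗ[A] N''} (hf : Function.Injective f)
    (hfg : Function.Exact f g) (hg : Function.Surjective g)
    (Q : Type u) [AddCommGroup Q] [Module A Q] :
    Function.Injective (LinearMap.rTensor Q f) :=
  aux_key hf hfg hg Q (Q →₀ A) (Finsupp.linearCombination A _root_.id)
    (Finsupp.linearCombination_surjective A Function.surjective_id)

/-- If `L0` is flat and the inclusion of a submodule `I` stays injective after tensoring
with any module, then `L0 ⧸ I` is flat. -/
lemma aux_flat_of_rTensor_inj
    {L0 : Type u} [AddCommGroup L0] [Module A L0] [Module.Flat A L0]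
    (I : Submodule A L0)
    (hI : ∀ (Q : Type u) [AddCommGroup Q] [Module A Q],
      Function.Injective (LinearMap.rTensor Q I.subtype)) :
    Module.Flat A (L0 ⧸ I) := by
  rw [Module.Flat.iff_rTensor_injective']
  intro J
  rw [← LinearMap.ker_eq_bot, LinearMap.ker_eq_bot']
  intro x hx
  obtain ⟨y, hy⟩ := LinearMap.lTensor_surjective (J : Type u) (Submodule.mkQ_surjective I) x
  have h1 : LinearMap.lTensor A I.mkQ (LinearMap.rTensor L0 J.subtype y) = 0 := by
    rw [aux_tensor_sq J.subtype I.mkQ y, hy, hx]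
  obtain ⟨z, hz⟩ := (lTensor_exact A (LinearMap.exact_subtype_mkQ I)
    (Submodule.mkQ_surjective I) _).mp h1
  have h2 : LinearMap.lTensor (A ⧸ J) I.subtype (LinearMap.rTensor I J.mkQ z) = 0 := by
    rw [aux_tensor_sq J.mkQ I.subtype z, hz, ← LinearMap.comp_apply, ← LinearMap.rTensor_comp,
      (LinearMap.exact_subtype_mkQ J).linearMap_comp_eq_zero,
      LinearMap.rTensor_zero, LinearMap.zero_apply]
  have h3 : LinearMap.rTensor (I : Type u) J.mkQ z = 0 :=
    (LinearMap.map_eq_zero_iff _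
      ((LinearMap.lTensor_inj_iff_rTensor_inj _ _).mpr (hI (A ⧸ J)))).mp h2
  obtain ⟨w, hw⟩ := (rTensor_exact (I : Type u) (LinearMap.exact_subtype_mkQ J)
    (Submodule.mkQ_surjective J) z).mp h3
  have h4 : LinearMap.rTensor L0 J.subtype (LinearMap.lTensor (J : Type u) I.subtype w)
      = LinearMap.rTensor L0 J.subtype y := by
    rw [← aux_tensor_sq J.subtype I.subtype w, hw, hz]
  have h5 : LinearMap.lTensor (J : Type u) I.subtype w = y :=
    Module.Flat.rTensor_preserves_injective_linearMap J.subtype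
      (Submodule.injective_subtype J) h4
  rw [← hy, ← h5, ← LinearMap.comp_apply, ← LinearMap.lTensor_comp,
    (LinearMap.exact_subtype_mkQ I).linearMap_comp_eq_zero,
    LinearMap.lTensor_zero, LinearMap.zero_apply]

end Aux

/-- For a map `d₁ : L₁ → L₀` of flat modules over a commutative ring `A`,
the cokernel of `d₁` is flat iff for every `A`-module `Q` the natural map
`(ker d₁) ⊗ Q → ker (d₁ ⊗ id_Q)` is an isomorphism. -/
theorem stmt8 {A : Type u} [CommRing A]
    {L1 L0 : Type u} [AddCommGroup L1] [AddCommGroup L0]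
    [Module A L1] [Module A L0] [Module.Flat A L1] [Module.Flat A L0]
    (d1 : L1 →ₗ[A] L0) :
    Module.Flat A (L0 ⧸ LinearMap.range d1) ↔
      ∀ (Q : Type u) [AddCommGroup Q] [Module A Q],
        Function.Bijective
          (LinearMap.codRestrict (LinearMap.ker (d1.rTensor Q))
            ((LinearMap.ker d1).subtype.rTensor Q)
            (fun x => by
              have h : d1.comp (LinearMap.ker d1).subtype = 0 := by
                ext y; simp
              rw [LinearMap.mem_ker, ← LinearMap.comp_apply, ← LinearMap.rTensor_comp, h]
              simp)) := by
  set K := LinearMap.ker d1 with hK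
  set I := LinearMap.range d1 with hIdef
  set ι : K →ₗ[A] L1 := K.subtype with hι
  set p : L1 →ₗ[A] I := d1.rangeRestrict with hp
  have hjp : I.subtype.comp p = d1 := by ext x; simp [hp]
  have hpsurj : Function.Surjective p := LinearMap.surjective_rangeRestrict d1
  have hexact : Function.Exact ι p := by
    rw [LinearMap.exact_iff, hp, LinearMap.ker_rangeRestrict, hι, Submodule.range_subtype, hK]
  have hpι : p.comp ι = 0 := hexact.linearMap_comp_eq_zero
  constructor
  · intro hC Q _ _
    -- `I ⊗ Q → L0 ⊗ Q` is injective for every `Q`, since `L0 ⧸ I` is flat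
    have hj : ∀ (Q' : Type u) [AddCommGroup Q'] [Module A Q'],
        Function.Injective (LinearMap.rTensor Q' I.subtype) := fun Q' _ _ =>
      aux_rTensor_inj_of_flat_quot (Submodule.injective_subtype I)
        (LinearMap.exact_subtype_mkQ I) (Submodule.mkQ_surjective I) Q'
    -- `I` is flat
    have hIflat : Module.Flat A I := by
      rw [Module.Flat.iff_rTensor_injective']
      intro J
      have hcomp : (I.subtype.lTensor A).comp (LinearMap.rTensor I J.subtype)
          = (LinearMap.rTensor L0 J.subtype).comp (I.subtype.lTensor (J : Type u)) := by
        rw [LinearMap.lTensor_comp_rTensor, LinearMap.rTensor_comp_lTensor]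
      have hcinj : Function.Injective
          ((I.subtype.lTensor A).comp (LinearMap.rTensor I J.subtype)) := by
        rw [hcomp, LinearMap.coe_comp]
        exact (Module.Flat.rTensor_preserves_injective_linearMap J.subtype
          (Submodule.injective_subtype J)).comp
          ((LinearMap.lTensor_inj_iff_rTensor_inj _ _).mpr (hj (J : Type u)))
      rw [LinearMap.coe_comp] at hcinj
      exact hcinj.of_comp
    -- hence `K ⊗ Q → L1 ⊗ Q` is injective
    have hιinj : Function.Injective (LinearMap.rTensor Q ι) :=
      aux_rTensor_inj_of_flat_quot (Submodule.injective_subtype K) hexact hpsurj Q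
    constructor
    · intro a b hab
      exact hιinj (congrArg Subtype.val hab)
    · rintro ⟨y, hy⟩
      rw [LinearMap.mem_ker] at hy
      have h6 : LinearMap.rTensor Q I.subtype (LinearMap.rTensor Q p y) = 0 := by
        rw [← LinearMap.comp_apply, ← LinearMap.rTensor_comp, hjp, hy]
      have h7 : LinearMap.rTensor Q p y = 0 :=
        (LinearMap.map_eq_zero_iff _ (hj Q)).mp h6
      obtain ⟨w, hw⟩ := (rTensor_exact Q hexact hpsurj y).mp h7
      exact ⟨w, Subtype.ext (by simpa [LinearMap.codRestrict_apply] using hw)⟩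
  · intro h
    apply aux_flat_of_rTensor_inj I
    intro Q _ _
    rw [← LinearMap.ker_eq_bot, LinearMap.ker_eq_bot']
    intro z hz
    obtain ⟨y, hy⟩ := LinearMap.rTensor_surjective Q hpsurj z
    have hyker : y ∈ LinearMap.ker (d1.rTensor Q) := by
      rw [LinearMap.mem_ker, ← hjp, LinearMap.rTensor_comp, LinearMap.comp_apply, hy, hz]
    obtain ⟨w, hw⟩ := (h Q).2 ⟨y, hyker⟩
    have hw' : LinearMap.rTensor Q ι w = y := congrArg Subtype.val hw
    rw [← hy, ← hw', ← LinearMap.comp_apply, ← LinearMap.rTensor_comp, hpι,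
      LinearMap.rTensor_zero, LinearMap.zero_apply]
end

section
/- Let A be a discrete valuation ring with uniformizer a and residue field k = A/(a), and let H be an A-module. Let H_τ ⊆ H be the torsion submodule. Then there is an exact sequence of A-modules 0 → aH_τ → H → (H/H_τ) ×_{(H/H_τ) ⊗_A k} (H ⊗_A k) → 0, where the map from H is given by the canonical projection H → H/H_τ together with the reduction H → H ⊗_A k, and the fiber product is taken over the two canonical maps to (H/H_τ) ⊗_A k. -/
/-!
The kernel of `x ↦ ([x], x ⊗ 1)` is `H_τ ∩ aH`, and `H_τ ∩ aH = aH_τ` because `a` is a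
non-zero-divisor: if `a • y` is torsion, so is `y`. Surjectivity onto the fibre product is right
exactness of `- ⊗_A k` on `0 → H_τ → H → H/H_τ → 0`: if `([x], t)` lies in the fibre product,
then `t - x ⊗ 1` dies in `(H/H_τ) ⊗ k`, hence equals `s ⊗ 1` with `s ∈ H_τ`, and `x + s` is a
preimage.
-/

open TensorProduct LinearMap

namespace TensorProduct

variable {R M : Type*} [CommRing R] [AddCommGroup M] [Module R M] (I : Ideal R)

theorem flip_mk_one_surjective : Function.Surjective ((mk R M (R ⧸ I)).flip 1) := by
  rw [← tensorQuotEquivQuotSMul_symm_comp_mkQ, coe_comp, LinearEquiv.coe_coe]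
  exact (tensorQuotEquivQuotSMul M I).symm.surjective.comp (Submodule.mkQ_surjective _)

theorem ker_flip_mk_one : ker ((mk R M (R ⧸ I)).flip 1) = I • ⊤ := by
  rw [← tensorQuotEquivQuotSMul_symm_comp_mkQ, LinearEquiv.ker_comp, Submodule.ker_mkQ]

end TensorProduct

namespace Submodule

variable {R M : Type*} [CommRing R] [AddCommGroup M] [Module R M]

open scoped Pointwise in
theorem torsion_inf_span_singleton_smul_top {a : R} (ha : a ∈ nonZeroDivisors R) :
    torsion R M ⊓ Ideal.span {a} • ⊤ = (torsion R M).map (lsmul R M a) := by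
  rw [ideal_span_singleton_smul]
  refine le_antisymm ?_ ?_
  · rintro _ ⟨hx, y, -, rfl⟩
    obtain ⟨c, hc⟩ := (mem_torsion_iff _).mp hx
    exact ⟨y, (mem_torsion_iff y).mpr ⟨c * ⟨a, ha⟩, by rwa [mul_smul]⟩, rfl⟩
  · rintro _ ⟨y, hy, rfl⟩
    exact ⟨smul_mem _ a hy, smul_mem_pointwise_smul y a ⊤ trivial⟩

variable (N : Submodule R M) (I : Ideal R)

theorem ker_prod_mkQ_flip_mk_one :
    ker (N.mkQ.prod ((TensorProduct.mk R M (R ⧸ I)).flip 1)) = N ⊓ I • ⊤ := by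
  rw [ker_prod, ker_mkQ, TensorProduct.ker_flip_mk_one]

theorem range_prod_mkQ_flip_mk_one :
    range (N.mkQ.prod ((TensorProduct.mk R M (R ⧸ I)).flip 1)) =
      ker (((TensorProduct.mk R (M ⧸ N) (R ⧸ I)).flip 1).comp
          (LinearMap.fst R (M ⧸ N) (M ⊗[R] (R ⧸ I))) -
        (N.mkQ.rTensor (R ⧸ I)).comp (LinearMap.snd R (M ⧸ N) (M ⊗[R] (R ⧸ I)))) := by
  ext ⟨u, t⟩
  simp only [mem_range, prod_apply, Function.prod, Prod.mk.injEq, mem_ker, LinearMap.sub_apply,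
    coe_comp, Function.comp_apply, fst_apply, snd_apply, flip_apply, mk_apply, mkQ_apply,
    sub_eq_zero]
  constructor
  · rintro ⟨x, rfl, rfl⟩
    rw [rTensor_tmul, mkQ_apply]
  · intro h
    obtain ⟨x, rfl⟩ := N.mkQ_surjective u
    have hker : t - x ⊗ₜ 1 ∈ ker (N.mkQ.rTensor (R ⧸ I)) := by
      rw [mem_ker, map_sub, rTensor_tmul, ← h, mkQ_apply, sub_self]
    obtain ⟨w, hw⟩ := (rTensor_exact (R ⧸ I) (exact_subtype_mkQ N) N.mkQ_surjective _).mp hker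
    obtain ⟨s, rfl⟩ := TensorProduct.flip_mk_one_surjective I w
    refine ⟨x + s, by simp, ?_⟩
    rw [flip_apply, mk_apply, rTensor_tmul, subtype_apply] at hw
    rw [add_tmul, hw, add_sub_cancel]

end Submodule

theorem stmt11_general {A : Type*} [CommRing A] [IsDomain A]
    (a : A) (ha : Irreducible a)
    {H : Type*} [AddCommGroup H] [Module A H] :
    LinearMap.ker
        (LinearMap.prod (Submodule.torsion A H).mkQ
          ((TensorProduct.mk A H (A ⧸ Ideal.span {a})).flip 1)) =
      Submodule.map (LinearMap.lsmul A H a) (Submodule.torsion A H) ∧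
    LinearMap.range
        (LinearMap.prod (Submodule.torsion A H).mkQ
          ((TensorProduct.mk A H (A ⧸ Ideal.span {a})).flip 1)) =
      LinearMap.ker
        (((TensorProduct.mk A (H ⧸ Submodule.torsion A H) (A ⧸ Ideal.span {a})).flip 1).comp
            (LinearMap.fst A (H ⧸ Submodule.torsion A H)
              (TensorProduct A H (A ⧸ Ideal.span {a}))) -
          ((Submodule.torsion A H).mkQ.rTensor (A ⧸ Ideal.span {a})).comp
            (LinearMap.snd A (H ⧸ Submodule.torsion A H)
              (TensorProduct A H (A ⧸ Ideal.span {a})))) := by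
  refine ⟨?_, Submodule.range_prod_mkQ_flip_mk_one _ _⟩
  rw [Submodule.ker_prod_mkQ_flip_mk_one, Submodule.torsion_inf_span_singleton_smul_top
    (mem_nonZeroDivisors_of_ne_zero ha.ne_zero)]

/-- (5.12) Let `A` be a DVR with uniformizer `a` and residue field `k = A/(a)`,
`H` an `A`-module with torsion submodule `H_τ`.  The map
`H → (H/H_τ) × (H ⊗ k)`, `x ↦ ([x], x ⊗ 1)`, has kernel `a·H_τ` and range the
fiber product `(H/H_τ) ×_{(H/H_τ) ⊗ k} (H ⊗ k)`, giving the exact sequence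
`0 → aH_τ → H → (H/H_τ) ×_{(H/H_τ)⊗k} (H⊗k) → 0`. -/
theorem stmt11 {A : Type*} [CommRing A] [IsDomain A] [IsDiscreteValuationRing A]
    (a : A) (ha : Irreducible a)
    {H : Type*} [AddCommGroup H] [Module A H] :
    LinearMap.ker
        (LinearMap.prod (Submodule.torsion A H).mkQ
          ((TensorProduct.mk A H (A ⧸ Ideal.span {a})).flip 1)) =
      Submodule.map (LinearMap.lsmul A H a) (Submodule.torsion A H) ∧
    LinearMap.range
        (LinearMap.prod (Submodule.torsion A H).mkQ
          ((TensorProduct.mk A H (A ⧸ Ideal.span {a})).flip 1)) =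
      LinearMap.ker
        (((TensorProduct.mk A (H ⧸ Submodule.torsion A H) (A ⧸ Ideal.span {a})).flip 1).comp
            (LinearMap.fst A (H ⧸ Submodule.torsion A H)
              (TensorProduct A H (A ⧸ Ideal.span {a}))) -
          ((Submodule.torsion A H).mkQ.rTensor (A ⧸ Ideal.span {a})).comp
            (LinearMap.snd A (H ⧸ Submodule.torsion A H)
              (TensorProduct A H (A ⧸ Ideal.span {a})))) :=
  stmt11_general a ha
end

section
/- Let k be a field and let M₁ ⊆ J ⊆ M₀ be k-modules (more generally graded R-modules for R = k[X,Y,Z,T]) with quotients M = J/M₁ and M₋₁ = M₀/J, with inclusion maps l : M₁ → J, i : J → M₀, projection p : M₀ → M₋₁, and j = i ∘ l. Let A be a discrete valuation ring which is a k-algebra with uniformizer a, residue field k and fraction field K. Consider the complex of A-modules M• = (M₁ ⊗_k A →^{j⊗a} M₀ ⊗_k A →^{p⊗a} M₋₁ ⊗_k A), where (f ⊗ a)(x ⊗ λ) = f(x) ⊗ aλ. Then (p⊗a)∘(j⊗a) = 0, and: h₀(M• ⊗_A K) ≅ M ⊗_k K, while h₀(M• ⊗_A k) ≅ M₀. -/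
/-!
Over the fraction field `a` is invertible, so the two differentials have the same kernel and image
as `j ⊗ 1` and `p ⊗ 1`. As `A` is flat over `k` and `K` is flat over `A`, the sequences
`0 → M₁ → J → M → 0` and `0 → J → M₀ → M₋₁` stay exact after base change, which identifies the
homology with `(A ⊗ M) ⊗ K`. Over the residue field `a` acts by zero, so both differentials vanish
and the homology is all of `(A ⊗ M₀) ⊗ k`.
-/

open LinearMap TensorProduct

section SMulUnit

variable {A X Y : Type*} [CommSemiring A] [AddCommMonoid X] [Module A X] [AddCommMonoid Y]
  [Module A Y] {a : A}

theorem LinearMap.ker_smul_of_isUnit (g : X →ₗ[A] Y)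
    (h : IsUnit (algebraMap A (Module.End A Y) a)) : ker (a • g) = ker g := by
  ext x
  simpa using ((Module.End.isUnit_iff _).mp h).1.eq_iff (b := 0)

theorem LinearMap.range_smul_of_isUnit (g : X →ₗ[A] Y)
    (h : IsUnit (algebraMap A (Module.End A X) a)) : range (a • g) = range g := by
  refine le_antisymm (range_smul_le_range g a) ?_
  rintro _ ⟨x, rfl⟩
  obtain ⟨y, rfl⟩ := ((Module.End.isUnit_iff _).mp h).2 x
  exact ⟨y, by simp⟩

theorem Module.End.isUnit_algebraMap_tensor (Q : Type*) [AddCommMonoid Q] [Module A Q]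
    (h : IsUnit (algebraMap A (Module.End A Q) a)) :
    IsUnit (algebraMap A (Module.End A (X ⊗[A] Q)) a) := by
  simpa using h.map (Module.End.lTensorAlgHom A Q X)

theorem rTensor_smul_eq_zero_of_smul_eq_zero {Q : Type*} [AddCommMonoid Q] [Module A Q]
    (h : ∀ q : Q, a • q = 0) (f : X →ₗ[A] Y) : (a • f).rTensor Q = 0 := by
  ext x q
  simp [← tmul_smul, h]

end SMulUnit

theorem exists_surjective_ker_eq_comap_range {R X Y Z V : Type*} [Semiring R]
    [AddCommMonoid X] [Module R X] [AddCommMonoid Y] [Module R Y] [AddCommMonoid Z] [Module R Z]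
    [AddCommMonoid V] [Module R V] {l : X →ₗ[R] Y} {q : Y →ₗ[R] V} {i : Y →ₗ[R] Z}
    {K : Submodule R Z} {j : X →ₗ[R] Z} (hlq : Function.Exact l q) (hq : Function.Surjective q)
    (hi : Function.Injective i) (hiK : range i = K) (hj : range (i ∘ₗ l) = range j) :
    ∃ φ : K →ₗ[R] V, Function.Surjective φ ∧ ker φ = (range j).comap K.subtype := by
  let e : Y ≃ₗ[R] K := (LinearEquiv.ofInjective i hi).trans (LinearEquiv.ofEq _ _ hiK)
  have he : ∀ w, i (e.symm w) = w := fun w => congrArg Subtype.val (e.apply_symm_apply w)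
  refine ⟨q ∘ₗ e.symm.toLinearMap, hq.comp e.symm.surjective, ?_⟩
  ext w
  simp only [mem_ker, coe_comp, LinearEquiv.coe_coe, Function.comp_apply, Submodule.mem_comap,
    Submodule.coe_subtype, ← hj, mem_range]
  rw [hlq]
  constructor
  · rintro ⟨y, hy⟩
    exact ⟨y, by rw [hy, he]⟩
  · rintro ⟨y, hy⟩
    exact ⟨y, hi (by rw [hy, he])⟩

section FlatBaseChange

variable {R : Type*} (A Q : Type*) [CommRing R] [CommRing A] [Algebra R A] [AddCommGroup Q]
  [Module A Q] {M N P : Type*} [AddCommGroup M] [Module R M] [AddCommGroup N] [Module R N]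
  [AddCommGroup P] [Module R P]

theorem Function.Surjective.baseChange_rTensor {g : N →ₗ[R] P} (hg : Function.Surjective g) :
    Function.Surjective ((g.baseChange A).rTensor Q) :=
  rTensor_surjective Q (baseChange_surjective A hg)

variable [Module.Flat R A] [Module.Flat A Q]

theorem Function.Injective.baseChange_rTensor {f : M →ₗ[R] N} (hf : Function.Injective f) :
    Function.Injective ((f.baseChange A).rTensor Q) := by
  apply Module.Flat.rTensor_preserves_injective_linearMap
  rw [baseChange_eq_ltensor]
  exact Module.Flat.lTensor_preserves_injective_linearMap f hf

theorem Function.Exact.baseChange_rTensor {f : M →ₗ[R] N} {g : N →ₗ[R] P}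
    (h : Function.Exact f g) :
    Function.Exact ((f.baseChange A).rTensor Q) ((g.baseChange A).rTensor Q) := by
  apply Module.Flat.rTensor_exact
  rw [baseChange_eq_ltensor, baseChange_eq_ltensor]
  exact Module.Flat.lTensor_exact A h

end FlatBaseChange

theorem exists_homology_rTensor_of_isUnit {R M0 : Type*} [CommRing R] [AddCommGroup M0]
    [Module R M0] {J M1 : Submodule R M0} (hJM : M1 ≤ J) (A Q : Type*) [CommRing A] [Algebra R A]
    [Module.Flat R A] [AddCommGroup Q] [Module A Q] [Module.Flat A Q] {a : A}
    (ha : IsUnit (algebraMap A (Module.End A Q) a)) :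
    ∃ φ : ker ((a • J.mkQ.baseChange A).rTensor Q) →ₗ[A]
        (A ⊗[R] (J ⧸ M1.comap J.subtype)) ⊗[A] Q, Function.Surjective φ ∧
      ker φ = (range ((a • M1.subtype.baseChange A).rTensor Q)).comap
        (ker ((a • J.mkQ.baseChange A).rTensor Q)).subtype := by
  have hl : Function.Exact (Submodule.inclusion hJM) (M1.comap J.subtype).mkQ :=
    exact_iff.mpr (by rw [Submodule.ker_mkQ, Submodule.range_inclusion])
  refine exists_surjective_ker_eq_comap_range (hl.baseChange_rTensor A Q)
    ((Submodule.mkQ_surjective _).baseChange_rTensor A Q)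
    (J.injective_subtype.baseChange_rTensor A Q) ?_ ?_
  · rw [rTensor_smul, ker_smul_of_isUnit _ (Module.End.isUnit_algebraMap_tensor Q ha)]
    exact (exact_iff.mp ((exact_subtype_mkQ J).baseChange_rTensor A Q)).symm
  · rw [rTensor_smul, range_smul_of_isUnit _ (Module.End.isUnit_algebraMap_tensor Q ha),
      ← rTensor_comp, ← baseChange_comp, Submodule.subtype_comp_inclusion]

theorem exists_homology_rTensor_of_smul_eq_zero {A X Y W Q : Type*} [CommSemiring A]
    [AddCommMonoid X] [Module A X] [AddCommMonoid Y] [Module A Y] [AddCommMonoid W] [Module A W]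
    [AddCommMonoid Q] [Module A Q] {a : A} (ha : ∀ q : Q, a • q = 0)
    (f : X →ₗ[A] Y) (g : Y →ₗ[A] W) :
    ∃ ψ : ker ((a • g).rTensor Q) →ₗ[A] Y ⊗[A] Q, Function.Surjective ψ ∧
      ker ψ = (range ((a • f).rTensor Q)).comap (ker ((a • g).rTensor Q)).subtype := by
  rw [rTensor_smul_eq_zero_of_smul_eq_zero ha f, rTensor_smul_eq_zero_of_smul_eq_zero ha g]
  exact ⟨(ker 0).subtype, fun y => ⟨⟨y, by simp⟩, rfl⟩, by simp⟩

theorem Ideal.Quotient.smul_eq_zero_of_span_singleton {A : Type*} [CommRing A] (a : A)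
    (q : A ⧸ Ideal.span {a}) : a • q = 0 := by
  obtain ⟨x, rfl⟩ := Ideal.Quotient.mk_surjective q
  rw [Algebra.smul_def, Ideal.Quotient.algebraMap_eq, ← map_mul, Ideal.Quotient.eq_zero_iff_mem]
  exact Ideal.mul_mem_right x _ (Ideal.mem_span_singleton_self a)

theorem stmt13_general {k : Type u} [Field k]
    {M0 : Type u} [AddCommGroup M0] [Module k M0]
    (J M1 : Submodule k M0) (hJM : M1 ≤ J)
    {A : Type u} [CommRing A] [IsDomain A] [Algebra k A]
    (a : A) (ha : Irreducible a) :
    ((a • LinearMap.baseChange A J.mkQ).comp (a • LinearMap.baseChange A M1.subtype) = 0) ∧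
    (∃ φ : LinearMap.ker ((a • LinearMap.baseChange A J.mkQ).rTensor (FractionRing A)) →ₗ[A]
        TensorProduct A (TensorProduct k A (J ⧸ M1.comap J.subtype)) (FractionRing A),
      Function.Surjective φ ∧
      LinearMap.ker φ =
        (LinearMap.range ((a • LinearMap.baseChange A M1.subtype).rTensor
            (FractionRing A))).comap
          (LinearMap.ker ((a • LinearMap.baseChange A J.mkQ).rTensor
            (FractionRing A))).subtype) ∧
    (∃ ψ : LinearMap.ker ((a • LinearMap.baseChange A J.mkQ).rTensor (A ⧸ Ideal.span {a})) →ₗ[A]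
        TensorProduct A (TensorProduct k A M0) (A ⧸ Ideal.span {a}),
      Function.Surjective ψ ∧
      LinearMap.ker ψ =
        (LinearMap.range ((a • LinearMap.baseChange A M1.subtype).rTensor
            (A ⧸ Ideal.span {a}))).comap
          (LinearMap.ker ((a • LinearMap.baseChange A J.mkQ).rTensor
            (A ⧸ Ideal.span {a}))).subtype) := by
  have hcomplex : J.mkQ ∘ₗ M1.subtype = 0 := by
    ext x
    simpa using hJM x.2
  have ha_unit : IsUnit (algebraMap A (Module.End A (FractionRing A)) a) :=
    IsLocalizedModule.map_units (Algebra.linearMap A (FractionRing A))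
      ⟨a, mem_nonZeroDivisors_of_ne_zero ha.ne_zero⟩
  refine ⟨?_, exists_homology_rTensor_of_isUnit hJM A (FractionRing A) ha_unit,
    exists_homology_rTensor_of_smul_eq_zero (Ideal.Quotient.smul_eq_zero_of_span_singleton a) _ _⟩
  rw [smul_comp, comp_smul, ← baseChange_comp, hcomplex, baseChange_zero, smul_zero, smul_zero]

/-- (5.15, trivial triad) Let `k` be a field, `M₁ ⊆ J ⊆ M₀` `k`-modules with
`M = J/M₁`, `j : M₁ → M₀` the inclusion and `p : M₀ → M₀/J` the projection.
Let `A` be a DVR `k`-algebra with uniformizer `a`, residue field `k` and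
fraction field `K`.  Consider the complex of `A`-modules
`A⊗M₁ → A⊗M₀ → A⊗(M₀/J)` with differentials `a•(j⊗1)` and `a•(p⊗1)`.
Then it is a complex; its `h₀` after tensoring over `A` with `K` is
`(A ⊗_k M) ⊗_A K` (i.e. `M ⊗_k K`), and its `h₀` after tensoring with the
residue field `A/(a)` is `(A ⊗_k M₀) ⊗_A (A/(a))` (i.e. `M₀`); the homology
identifications are expressed by surjections with kernel exactly the image of
the previous differential. -/
theorem stmt13 {k : Type u} [Field k]
    {M0 : Type u} [AddCommGroup M0] [Module k M0]
    (J M1 : Submodule k M0) (hJM : M1 ≤ J)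
    {A : Type u} [CommRing A] [IsDomain A] [IsDiscreteValuationRing A] [Algebra k A]
    (a : A) (ha : Irreducible a)
    (hres : Function.Bijective ((Ideal.Quotient.mk (Ideal.span {a})).comp (algebraMap k A))) :
    ((a • LinearMap.baseChange A J.mkQ).comp (a • LinearMap.baseChange A M1.subtype) = 0) ∧
    (∃ φ : LinearMap.ker ((a • LinearMap.baseChange A J.mkQ).rTensor (FractionRing A)) →ₗ[A]
        TensorProduct A (TensorProduct k A (J ⧸ M1.comap J.subtype)) (FractionRing A),
      Function.Surjective φ ∧
      LinearMap.ker φ =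
        (LinearMap.range ((a • LinearMap.baseChange A M1.subtype).rTensor
            (FractionRing A))).comap
          (LinearMap.ker ((a • LinearMap.baseChange A J.mkQ).rTensor
            (FractionRing A))).subtype) ∧
    (∃ ψ : LinearMap.ker ((a • LinearMap.baseChange A J.mkQ).rTensor (A ⧸ Ideal.span {a})) →ₗ[A]
        TensorProduct A (TensorProduct k A M0) (A ⧸ Ideal.span {a}),
      Function.Surjective ψ ∧
      LinearMap.ker ψ =
        (LinearMap.range ((a • LinearMap.baseChange A M1.subtype).rTensor
            (A ⧸ Ideal.span {a}))).comap
          (LinearMap.ker ((a • LinearMap.baseChange A J.mkQ).rTensor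
            (A ⧸ Ideal.span {a}))).subtype) :=
  stmt13_general J M1 hJM a ha
end

section
/- Let A be a commutative ring and let f : L• → L•' and g : L•' → L•'' be morphisms of three-term complexes of flat A-modules. Suppose that both g and g ∘ f induce, for every A-module Q, an isomorphism on h₀(− ⊗_A Q) and a monomorphism on h₋₁(− ⊗_A Q). Then f also induces, for every A-module Q, an isomorphism on h₀(− ⊗_A Q) and a monomorphism on h₋₁(− ⊗_A Q). -/
universe u

/-- Two-out-of-three property (1.8.b): if `g ∘ f` and `g` are pseudo-isomorphisms
of three-term complexes of flat modules, then so is `f`. -/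
theorem stmt16 {A : Type u} [CommRing A]
    {L1 L0 Lm1 M1 M0 Mm1 N1 N0 Nm1 : Type u}
    [AddCommGroup L1] [AddCommGroup L0] [AddCommGroup Lm1]
    [AddCommGroup M1] [AddCommGroup M0] [AddCommGroup Mm1]
    [AddCommGroup N1] [AddCommGroup N0] [AddCommGroup Nm1]
    [Module A L1] [Module A L0] [Module A Lm1]
    [Module A M1] [Module A M0] [Module A Mm1]
    [Module A N1] [Module A N0] [Module A Nm1]
    [Module.Flat A L1] [Module.Flat A L0] [Module.Flat A Lm1]
    [Module.Flat A M1] [Module.Flat A M0] [Module.Flat A Mm1]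
    [Module.Flat A N1] [Module.Flat A N0] [Module.Flat A Nm1]
    (d1 : L1 →ₗ[A] L0) (d0 : L0 →ₗ[A] Lm1) (hd : d0.comp d1 = 0)
    (e1 : M1 →ₗ[A] M0) (e0 : M0 →ₗ[A] Mm1) (he : e0.comp e1 = 0)
    (c1 : N1 →ₗ[A] N0) (c0 : N0 →ₗ[A] Nm1) (hcc : c0.comp c1 = 0)
    (f1 : L1 →ₗ[A] M1) (f0 : L0 →ₗ[A] M0) (fm1 : Lm1 →ₗ[A] Mm1)
    (hfsq1 : e1.comp f1 = f0.comp d1) (hfsq0 : e0.comp f0 = fm1.comp d0)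
    (g1 : M1 →ₗ[A] N1) (g0 : M0 →ₗ[A] N0) (gm1 : Mm1 →ₗ[A] Nm1)
    (hgsq1 : c1.comp g1 = g0.comp e1) (hgsq0 : c0.comp g0 = gm1.comp e0)
    (hg : IsPsi e1 e0 c1 c0 g0 gm1)
    (hgf : IsPsi d1 d0 c1 c0 (g0.comp f0) (gm1.comp fm1)) :
    IsPsi d1 d0 e1 e0 f0 fm1 := by
  intro Q _ _
  obtain ⟨hg1, hg2, hg3⟩ := hg Q
  obtain ⟨hgf1, hgf2, hgf3⟩ := hgf Q
  -- commuting squares after tensoring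
  have sqf0 : ∀ y, (e0.rTensor Q) (f0.rTensor Q y) = (fm1.rTensor Q) (d0.rTensor Q y) := by
    intro y
    rw [← LinearMap.comp_apply, ← LinearMap.rTensor_comp, hfsq0, LinearMap.rTensor_comp,
      LinearMap.comp_apply]
  have sqg0 : ∀ x, (c0.rTensor Q) (g0.rTensor Q x) = (gm1.rTensor Q) (e0.rTensor Q x) := by
    intro x
    rw [← LinearMap.comp_apply, ← LinearMap.rTensor_comp, hgsq0, LinearMap.rTensor_comp,
      LinearMap.comp_apply]
  have sqg1 : ∀ m, (c1.rTensor Q) (g1.rTensor Q m) = (g0.rTensor Q) (e1.rTensor Q m) := by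
    intro m
    rw [← LinearMap.comp_apply, ← LinearMap.rTensor_comp, hgsq1, LinearMap.rTensor_comp,
      LinearMap.comp_apply]
  have gf : ∀ y, (g0.comp f0).rTensor Q y = g0.rTensor Q (f0.rTensor Q y) := by
    intro y; rw [LinearMap.rTensor_comp, LinearMap.comp_apply]
  have gfm : ∀ z, (gm1.comp fm1).rTensor Q z = gm1.rTensor Q (fm1.rTensor Q z) := by
    intro z; rw [LinearMap.rTensor_comp, LinearMap.comp_apply]
  refine ⟨?_, ?_, ?_⟩
  · -- surjectivity on h₀
    intro x hx
    have hcx : c0.rTensor Q (g0.rTensor Q x) = 0 := by rw [sqg0, hx, map_zero]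
    obtain ⟨y, hy0, hy1⟩ := hgf1 (g0.rTensor Q x) hcx
    refine ⟨y, hy0, ?_⟩
    apply hg2
    · rw [map_sub, hx, sub_zero, sqf0, hy0, map_zero]
    · rw [map_sub, ← gf]; exact hy1
  · -- injectivity on h₀
    intro y hy0 hy1
    obtain ⟨m, hm⟩ := hy1
    apply hgf2 y hy0
    exact ⟨g1.rTensor Q m, by rw [sqg1, hm, gf]⟩
  · -- mono on h₋₁
    intro z hz
    obtain ⟨w, hw⟩ := hz
    apply hgf3
    exact ⟨g0.rTensor Q w, by rw [sqg0, hw, gfm]⟩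
end
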